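/- With κ_n(z) = nσ'(z) + κ₀(z) and ω_n = n²σ''/2 + nκ₀' + ω₀ as above, the transmutation identities hold: ∂_z ∘ (H(σ,κ_n)+ω_n) = (H(σ,κ_{n+1})+ω_{n+1}) ∘ ∂_z and (σ(z)∂_z + κ_{n+1}(z)) ∘ (H(σ,κ_{n+1})+ω_{n+1}) = (H(σ,κ_n)+ω_n) ∘ (σ(z)∂_z + κ_{n+1}(z)). Consequently, if (H(σ,κ_n)+ω_n)F = 0 then (H(σ,κ_{n+1})+ω_{n+1})(∂_zF) = 0, and if (H(σ,κ_{n+1})+ω_{n+1})F = 0 then (H(σ,κ_n)+ω_n)((σ∂_z+κ_{n+1})F) = 0. -/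

import Mathlib

open Polynomial

/-- The hypergeometric class operator
`H(σ,κ) = σ(z)∂_z² + (σ'(z)+κ(z))∂_z + κ'/2`. -/
noncomputable def Hop (σ κ : Polynomial ℂ) (f : ℂ → ℂ) (z : ℂ) : ℂ :=
  σ.eval z * deriv (deriv f) z
    + ((derivative σ).eval z + κ.eval z) * deriv f z
    + ((derivative κ).coeff 0 / 2) * f z

/-- `κ_n(z) = nσ'(z) + κ₀(z)`. -/
noncomputable def kap (σ κ₀ : Polynomial ℂ) (n : ℂ) : Polynomial ℂ :=
  Polynomial.C n * derivative σ + κ₀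

/-- `ω_n = n²σ''/2 + nκ₀' + ω₀`. -/
noncomputable def om (σ κ₀ : Polynomial ℂ) (ω₀ n : ℂ) : ℂ :=
  n ^ 2 * (derivative (derivative σ)).coeff 0 / 2 + n * (derivative κ₀).coeff 0 + ω₀

/-!
With the first-order operator `L = σ∂ + K`, where `K = κ + σ'` and `K'` is constant,
`H(σ,κ) + c = L∘∂ + λ` and `H(σ,K) + c' = ∂∘L + λ` for `λ = c + κ'/2 = c' - K'/2`.
Both transmutation identities are then the associativity statements
`∂∘(L∘∂ + λ) = (∂∘L + λ)∘∂` and `L∘(∂∘L + λ) = (L∘∂ + λ)∘L`.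
For `κ = κ_n` one has `K = κ_{n+1}`, and `ω_n + κ_n'/2 = ω_{n+1} - κ_{n+1}'/2`.
-/

noncomputable def ladderOp (σ K : ℂ[X]) (f : ℂ → ℂ) (z : ℂ) : ℂ :=
  σ.eval z * deriv f z + K.eval z * f z

lemma eval_derivative_of_natDegree_le_one {K : ℂ[X]} (hK : K.natDegree ≤ 1) (z : ℂ) :
    (derivative K).eval z = (derivative K).coeff 0 := by
  rw [eq_C_of_natDegree_le_zero ((natDegree_derivative_le K).trans (by omega)), eval_C,
    coeff_C_zero]

lemma differentiable_deriv_deriv_of_contDiff_three {f : ℂ → ℂ} (hf : ContDiff ℂ 3 f) :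
    Differentiable ℂ f ∧ Differentiable ℂ (deriv f) ∧
      Differentiable ℂ (deriv (deriv f)) := by
  obtain ⟨hf₀, -, hf₁⟩ := contDiff_succ_iff_deriv.mp (show ContDiff ℂ (2 + 1) f from hf)
  obtain ⟨hf₁, -, hf₂⟩ :=
    contDiff_succ_iff_deriv.mp (show ContDiff ℂ (1 + 1) (deriv f) from hf₁)
  exact ⟨hf₀, hf₁, hf₂.differentiable one_ne_zero⟩

section ladderOp

variable (σ : ℂ[X]) {K : ℂ[X]} {f g : ℂ → ℂ} {z : ℂ}

lemma hasDerivAt_ladderOp (hf : DifferentiableAt ℂ f z) (hf' : DifferentiableAt ℂ (deriv f) z) :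
    HasDerivAt (ladderOp σ K f)
      ((derivative σ).eval z * deriv f z + σ.eval z * deriv (deriv f) z
        + ((derivative K).eval z * f z + K.eval z * deriv f z)) z :=
  ((σ.hasDerivAt z).mul hf'.hasDerivAt).add ((K.hasDerivAt z).mul hf.hasDerivAt)

lemma deriv_ladderOp (hK : K.natDegree ≤ 1) (hf : DifferentiableAt ℂ f z)
    (hf' : DifferentiableAt ℂ (deriv f) z) :
    deriv (ladderOp σ K f) z = Hop σ K f z + (derivative K).coeff 0 / 2 * f z := by
  rw [(hasDerivAt_ladderOp σ hf hf').deriv, eval_derivative_of_natDegree_le_one hK, Hop]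
  ring

lemma ladderOp_add_const_mul (c : ℂ) (hf : DifferentiableAt ℂ f z)
    (hg : DifferentiableAt ℂ g z) :
    ladderOp σ K (fun w => f w + c * g w) z = ladderOp σ K f z + c * ladderOp σ K g z := by
  simp only [ladderOp, deriv_fun_add hf (hg.const_mul c), deriv_const_mul c hg]
  ring

lemma Hop_add_const_mul_eq_ladderOp_deriv (κ : ℂ[X]) (c : ℂ) (f : ℂ → ℂ) (z : ℂ) :
    Hop σ κ f z + c * f z
      = ladderOp σ (κ + derivative σ) (deriv f) z + (c + (derivative κ).coeff 0 / 2) * f z := by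
  simp only [Hop, ladderOp, eval_add]
  ring

lemma Hop_add_const_mul_eq_deriv_ladderOp (hK : K.natDegree ≤ 1) (c : ℂ)
    (hf : Differentiable ℂ f) (hf' : Differentiable ℂ (deriv f)) :
    Hop σ K f z + c * f z
      = deriv (ladderOp σ K f) z + (c - (derivative K).coeff 0 / 2) * f z := by
  rw [deriv_ladderOp σ hK (hf z) (hf' z)]
  ring

lemma differentiableAt_deriv_ladderOp (hK : K.natDegree ≤ 1) (hf : Differentiable ℂ f)
    (hf' : Differentiable ℂ (deriv f)) (hf'' : DifferentiableAt ℂ (deriv (deriv f)) z) :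
    DifferentiableAt ℂ (deriv (ladderOp σ K f)) z := by
  have h : deriv (ladderOp σ K f) = fun w =>
      ladderOp σ (K + derivative σ) (deriv f) w + (derivative K).coeff 0 * f w := by
    funext w
    rw [deriv_ladderOp σ hK (hf w) (hf' w), Hop_add_const_mul_eq_ladderOp_deriv]
    ring
  rw [h]
  exact (hasDerivAt_ladderOp σ (hf' z) hf'').differentiableAt.add ((hf z).const_mul _)

variable {σ}

theorem deriv_Hop_add_const_mul {κ : ℂ[X]} (hK : (κ + derivative σ).natDegree ≤ 1)
    {c c' : ℂ}
    (hc : c + (derivative κ).coeff 0 / 2 = c' - (derivative (κ + derivative σ)).coeff 0 / 2)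
    (f : ℂ → ℂ) (hf : ContDiff ℂ 3 f) (z : ℂ) :
    deriv (fun w => Hop σ κ f w + c * f w) z
      = Hop σ (κ + derivative σ) (deriv f) z + c' * deriv f z := by
  obtain ⟨hf₀, hf₁, hf₂⟩ := differentiable_deriv_deriv_of_contDiff_three hf
  conv_lhs => enter [1, w]; rw [Hop_add_const_mul_eq_ladderOp_deriv]
  rw [deriv_fun_add ((hasDerivAt_ladderOp σ (hf₁ z) (hf₂ z)).differentiableAt)
      ((hf₀ z).const_mul _), deriv_const_mul _ (hf₀ z),
    deriv_ladderOp σ hK (hf₁ z) (hf₂ z), hc]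
  ring

theorem ladderOp_Hop_add_const_mul {κ : ℂ[X]} (hK : (κ + derivative σ).natDegree ≤ 1)
    {c c' : ℂ}
    (hc : c + (derivative κ).coeff 0 / 2 = c' - (derivative (κ + derivative σ)).coeff 0 / 2)
    (f : ℂ → ℂ) (hf : ContDiff ℂ 3 f) (z : ℂ) :
    ladderOp σ (κ + derivative σ) (fun w => Hop σ (κ + derivative σ) f w + c' * f w) z
      = Hop σ κ (ladderOp σ (κ + derivative σ) f) z
          + c * ladderOp σ (κ + derivative σ) f z := by
  obtain ⟨hf₀, hf₁, hf₂⟩ := differentiable_deriv_deriv_of_contDiff_three hf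
  simp_rw [Hop_add_const_mul_eq_deriv_ladderOp σ hK c' hf₀ hf₁]
  rw [Hop_add_const_mul_eq_ladderOp_deriv, hc, ladderOp_add_const_mul σ _
    (differentiableAt_deriv_ladderOp σ hK hf₀ hf₁ (hf₂ z)) (hf₀ z)]

end ladderOp

section kap

variable {σ κ₀ : ℂ[X]}

lemma kap_add_derivative (n : ℂ) : kap σ κ₀ n + derivative σ = kap σ κ₀ (n + 1) := by
  simp only [kap, C_add, C_1]
  ring

lemma natDegree_kap_le_one (hσ : σ.natDegree ≤ 2) (hκ : κ₀.natDegree ≤ 1) (n : ℂ) :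
    (kap σ κ₀ n).natDegree ≤ 1 :=
  natDegree_add_le_of_degree_le
    ((natDegree_C_mul_le _ _).trans ((natDegree_derivative_le σ).trans (by omega))) hκ

lemma coeff_zero_derivative_kap (n : ℂ) :
    (derivative (kap σ κ₀ n)).coeff 0
      = n * (derivative (derivative σ)).coeff 0 + (derivative κ₀).coeff 0 := by
  simp [kap]

lemma om_add_coeff_zero_derivative_kap (ω₀ n : ℂ) :
    om σ κ₀ ω₀ n + (derivative (kap σ κ₀ n)).coeff 0 / 2
      = om σ κ₀ ω₀ (n + 1) - (derivative (kap σ κ₀ (n + 1))).coeff 0 / 2 := by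
  simp only [om, coeff_zero_derivative_kap]
  ring

end kap

/-- Transmutation identities `∂∘(H(σ,κ_n)+ω_n) = (H(σ,κ_{n+1})+ω_{n+1})∘∂` and
`(σ∂+κ_{n+1})∘(H(σ,κ_{n+1})+ω_{n+1}) = (H(σ,κ_n)+ω_n)∘(σ∂+κ_{n+1})`,
together with the resulting recurrence relations for solutions. -/
theorem transmutation_and_recurrence (σ κ₀ : Polynomial ℂ)
    (hσ : σ.natDegree ≤ 2) (hκ : κ₀.natDegree ≤ 1) (ω₀ n : ℂ) :
    (∀ f : ℂ → ℂ, ContDiff ℂ 3 f → ∀ z,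
      deriv (fun w => Hop σ (kap σ κ₀ n) f w + om σ κ₀ ω₀ n * f w) z
        = Hop σ (kap σ κ₀ (n + 1)) (deriv f) z + om σ κ₀ ω₀ (n + 1) * deriv f z) ∧
    (∀ f : ℂ → ℂ, ContDiff ℂ 3 f → ∀ z,
      σ.eval z * deriv (fun w => Hop σ (kap σ κ₀ (n + 1)) f w + om σ κ₀ ω₀ (n + 1) * f w) z
          + (kap σ κ₀ (n + 1)).eval z
              * (Hop σ (kap σ κ₀ (n + 1)) f z + om σ κ₀ ω₀ (n + 1) * f z)
        = Hop σ (kap σ κ₀ n)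
              (fun w => σ.eval w * deriv f w + (kap σ κ₀ (n + 1)).eval w * f w) z
          + om σ κ₀ ω₀ n
              * (σ.eval z * deriv f z + (kap σ κ₀ (n + 1)).eval z * f z)) ∧
    (∀ F : ℂ → ℂ, ContDiff ℂ 3 F →
      (∀ z, Hop σ (kap σ κ₀ n) F z + om σ κ₀ ω₀ n * F z = 0) →
      ∀ z, Hop σ (kap σ κ₀ (n + 1)) (deriv F) z + om σ κ₀ ω₀ (n + 1) * deriv F z = 0) ∧
    (∀ F : ℂ → ℂ, ContDiff ℂ 3 F →
      (∀ z, Hop σ (kap σ κ₀ (n + 1)) F z + om σ κ₀ ω₀ (n + 1) * F z = 0) →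
      ∀ z, Hop σ (kap σ κ₀ n)
              (fun w => σ.eval w * deriv F w + (kap σ κ₀ (n + 1)).eval w * F w) z
            + om σ κ₀ ω₀ n
                * (σ.eval z * deriv F z + (kap σ κ₀ (n + 1)).eval z * F z) = 0) := by
  have hK := natDegree_kap_le_one hσ hκ (n + 1)
  have hω := om_add_coeff_zero_derivative_kap (σ := σ) (κ₀ := κ₀) ω₀ n
  rw [← kap_add_derivative] at hK hω ⊢
  have transmute_deriv := deriv_Hop_add_const_mul hK hω
  have transmute_ladder := ladderOp_Hop_add_const_mul hK hω
  refine ⟨transmute_deriv, transmute_ladder, fun F hF hsol z => ?_, fun F hF hsol z => ?_⟩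
  · rw [← transmute_deriv F hF z, funext hsol, deriv_const]
  · refine (transmute_ladder F hF z).symm.trans ?_
    rw [funext hsol]
    simp [ladderOp]
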